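/- arXiv:hep-th/0407102 — 2 statements merged into one kernel-verified Lean document; each statement's English description precedes it below -/
import Mathlib

section
/- Let V be a D-dimensional real vector space with a Lorentzian bilinear form η, n ∈ V a nonzero null vector, and n̄ a null vector with η(n, n̄) = 1. Let T ⊆ V be the η-orthogonal complement of span{n, n̄} (the transverse subspace, of dimension D-2). If ω ∈ Λ^k V satisfies n ∧ ω = 0 and ι_{n^♭} ω = 0, then ω = n ∧ φ for a unique φ ∈ Λ^{k-1} T. -/
open ExteriorAlgebra

/-- The `k`-th exterior power of a subspace `T ⊆ V`, as a submodule of the exterior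
algebra of `V`: the span of wedge products of `k` vectors of `T`. -/
def extPowerOf {V : Type*} [AddCommGroup V] [Module ℝ V] (T : Submodule ℝ V) (k : ℕ) :
    Submodule ℝ (ExteriorAlgebra ℝ V) :=
  Submodule.span ℝ
    { x | ∃ f : Fin k → V, (∀ i, f i ∈ T) ∧ x = (List.ofFn fun i => ι ℝ (f i)).prod }

namespace LightconeAux

open CliffordAlgebra

variable {V : Type*} [AddCommGroup V] [Module ℝ V]

lemma one_mem_extPowerOf (T : Submodule ℝ V) : (1 : ExteriorAlgebra ℝ V) ∈ extPowerOf T 0 :=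
  Submodule.subset_span ⟨Fin.elim0, fun i => i.elim0, by simp⟩

lemma ι_mul_mem_extPowerOf {T : Submodule ℝ V} {t : V} (ht : t ∈ T) {j : ℕ}
    {x : ExteriorAlgebra ℝ V} (hx : x ∈ extPowerOf T j) :
    ι ℝ t * x ∈ extPowerOf T (j + 1) := by
  induction hx using Submodule.span_induction with
  | mem x hxm =>
    obtain ⟨f, hf, rfl⟩ := hxm
    refine Submodule.subset_span ⟨Fin.cons t f, ?_, ?_⟩
    · intro i
      refine Fin.cases ht (fun i => hf i) i
    · rw [List.ofFn_succ]
      simp [Fin.cons_zero, Fin.cons_succ]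
  | zero => simp
  | add a b _ _ ha hb => rw [mul_add]; exact add_mem ha hb
  | smul r a _ ha => rw [mul_smul_comm]; exact Submodule.smul_mem _ r ha

lemma contract_eq_zero_of_mem_extPowerOf {T : Submodule ℝ V} (d : Module.Dual ℝ V)
    (hd : ∀ t ∈ T, d t = 0) {j : ℕ} {x : ExteriorAlgebra ℝ V} (hx : x ∈ extPowerOf T j) :
    contractLeft (Q := (0 : QuadraticForm ℝ V)) d x = 0 := by
  induction hx using Submodule.span_induction with
  | mem x hxm =>
    obtain ⟨f, hf, rfl⟩ := hxm
    induction j with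
    | zero => simp
    | succ m ih =>
      rw [List.ofFn_succ, List.prod_cons, contractLeft_ι_mul,
        ih (fun i => f i.succ) (fun i => hf i.succ), hd _ (hf 0)]
      simp
  | zero => simp
  | add a b _ _ ha hb => rw [map_add, ha, hb, add_zero]
  | smul r a _ ha => rw [map_smul, ha, smul_zero]

end LightconeAux

set_option maxHeartbeats 2000000 in
/-- Light-cone decomposition: if `ω ∈ ⋀^k V` satisfies `n ∧ ω = 0` and `ι_{n♭} ω = 0`
at a null vector `n` (with null partner `n̄`, `η(n,n̄) = 1`, and transverse space `T`
the orthogonal complement of `span{n,n̄}`), then `ω = n ∧ φ` for a unique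
`φ ∈ ⋀^(k-1) T`. -/
theorem lightcone_unique_transverse (D : ℕ) (V : Type*) [AddCommGroup V] [Module ℝ V]
    (hdim : Module.finrank ℝ V = D) (η : LinearMap.BilinForm ℝ V)
    (hsym : ∀ x y : V, η x y = η y x) (hnd : η.Nondegenerate)
    (hLor : ∃ b : Module.Basis (Fin D) ℝ V, ∀ i j : Fin D,
      η (b i) (b j) = if i = j then (if (i : ℕ) = 0 then (-1 : ℝ) else 1) else 0)
    (n nbar : V) (hn : n ≠ 0) (hnull : η n n = 0) (hnbar : η nbar nbar = 0)
    (hpair : η n nbar = 1)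
    (k : ℕ) (ω : ExteriorAlgebra ℝ V) (hω : ω ∈ ⋀[ℝ]^k V)
    (hclosed : ι ℝ n * ω = 0)
    (hcoclosed : CliffordAlgebra.contractLeft (Q := (0 : QuadraticForm ℝ V)) (η n) ω = 0) :
    ∃! φ : ExteriorAlgebra ℝ V,
      φ ∈ extPowerOf (η.orthogonal (Submodule.span ℝ {n, nbar})) (k - 1) ∧
        ω = ι ℝ n * φ := by
  classical
  set T : Submodule ℝ V := η.orthogonal (Submodule.span ℝ {n, nbar}) with hT
  have hn_mem : n ∈ Submodule.span ℝ ({n, nbar} : Set V) :=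
    Submodule.subset_span (by simp)
  have hnbar_mem : nbar ∈ Submodule.span ℝ ({n, nbar} : Set V) :=
    Submodule.subset_span (by simp)
  have hηnT : ∀ t ∈ T, η n t = 0 := fun t ht => ht n hn_mem
  have hηnbarT : ∀ t ∈ T, η nbar t = 0 := fun t ht => ht nbar hnbar_mem
  have hbarpair : η nbar n = 1 := by rw [hsym]; exact hpair
  -- the projection onto T
  set Pl : V →ₗ[ℝ] V :=
    LinearMap.id - ((η nbar).smulRight n + (η n).smulRight nbar) with hPl
  have hPl_apply : ∀ v, Pl v = v - (η nbar v • n + η n v • nbar) := fun v => rfl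
  have hPT : ∀ v, Pl v ∈ T := by
    intro v s hs
    obtain ⟨a, b, rfl⟩ := Submodule.mem_span_pair.mp hs
    have h1 : η n (Pl v) = 0 := by
      rw [hPl_apply]
      simp only [map_sub, map_add, map_smul, smul_eq_mul]
      rw [hnull, hpair]; ring
    have h2 : η nbar (Pl v) = 0 := by
      rw [hPl_apply]
      simp only [map_sub, map_add, map_smul, smul_eq_mul]
      rw [hnbar, hbarpair]; ring
    show η (a • n + b • nbar) (Pl v) = 0
    rw [map_add, map_smul, map_smul, LinearMap.add_apply, LinearMap.smul_apply,
      LinearMap.smul_apply, h1, h2]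
    simp
  -- the algebra map induced by Pl
  set A : ExteriorAlgebra ℝ V →ₐ[ℝ] ExteriorAlgebra ℝ V :=
    ExteriorAlgebra.lift ℝ ⟨(ι ℝ).comp Pl, fun m => ι_sq_zero (Pl m)⟩ with hA
  have hA_ι : ∀ v, A (ι ℝ v) = ι ℝ (Pl v) := by
    intro v; rw [hA]; exact ExteriorAlgebra.lift_ι_apply ℝ _ _ v
  -- abbreviations
  set N : ExteriorAlgebra ℝ V := ι ℝ n with hN
  set Nb : ExteriorAlgebra ℝ V := ι ℝ nbar with hNb
  set cn : ExteriorAlgebra ℝ V →ₗ[ℝ] ExteriorAlgebra ℝ V :=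
    CliffordAlgebra.contractLeft (Q := (0 : QuadraticForm ℝ V)) (η n) with hcn
  set cb : ExteriorAlgebra ℝ V →ₗ[ℝ] ExteriorAlgebra ℝ V :=
    CliffordAlgebra.contractLeft (Q := (0 : QuadraticForm ℝ V)) (η nbar) with hcb
  have hcn_mul : ∀ (v : V) (x : ExteriorAlgebra ℝ V),
      cn (ι ℝ v * x) = η n v • x - ι ℝ v * cn x := fun v x =>
    CliffordAlgebra.contractLeft_ι_mul _ _ _
  have hcb_mul : ∀ (v : V) (x : ExteriorAlgebra ℝ V),
      cb (ι ℝ v * x) = η nbar v • x - ι ℝ v * cb x := fun v x =>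
    CliffordAlgebra.contractLeft_ι_mul _ _ _
  have hcbN : ∀ x : ExteriorAlgebra ℝ V, cb (N * x) = x - N * cb x := by
    intro x; rw [hN, hcb_mul n x, hbarpair, one_smul]
  have hcnNb : ∀ x : ExteriorAlgebra ℝ V, cn (Nb * x) = x - Nb * cn x := by
    intro x; rw [hNb, hcn_mul nbar x, hpair, one_smul]
  have hcbNb : ∀ x : ExteriorAlgebra ℝ V, cb (Nb * x) = -(Nb * cb x) := by
    intro x; rw [hNb, hcb_mul nbar x, hnbar, zero_smul, zero_sub]
  have hcnN : ∀ x : ExteriorAlgebra ℝ V, cn (N * x) = -(N * cn x) := by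
    intro x; rw [hN, hcn_mul n x, hnull, zero_smul, zero_sub]
  -- the expansion formula for F x := cb (N * cn (Nb * x))
  have hFexp : ∀ x : ExteriorAlgebra ℝ V,
      cb (N * cn (Nb * x)) = x - Nb * cn x - N * cb x - N * (Nb * cb (cn x)) := by
    intro x
    rw [hcnNb x, mul_sub, map_sub, hcbN x, hcbN (Nb * cn x), hcbNb (cn x), mul_neg,
      sub_neg_eq_add]
    abel
  -- swap lemmas
  have hsw : ∀ a b : V, ι ℝ a * ι ℝ b = -(ι ℝ b * ι ℝ a) := fun a b =>
    eq_neg_of_add_eq_zero_left (ExteriorAlgebra.ι_add_mul_swap a b)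
  have hNN : ∀ y : ExteriorAlgebra ℝ V, N * (N * y) = 0 := fun y => by
    rw [← mul_assoc, hN, ι_sq_zero, zero_mul]
  have hNbNb : ∀ y : ExteriorAlgebra ℝ V, Nb * (Nb * y) = 0 := fun y => by
    rw [← mul_assoc, hNb, ι_sq_zero, zero_mul]
  -- key identity: F = A
  have hkey : ∀ x : ExteriorAlgebra ℝ V, cb (N * cn (Nb * x)) = A x := by
    intro x
    induction x using CliffordAlgebra.left_induction with
    | algebraMap r =>
      rw [hFexp, AlgHom.commutes]
      simp [hcn, hcb]
    | add x y hx hy =>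
      simp only [mul_add, map_add, hx, hy]
    | ι_mul x v hx =>
      rw [hFexp] at hx ⊢
      have hιPl : ι ℝ (Pl v) = ι ℝ v - (η nbar v • N + η n v • Nb) := by
        rw [hPl_apply, map_sub, map_add, LinearMap.map_smul, LinearMap.map_smul, hN, hNb]
      rw [show A (ι ℝ v * x) = ι ℝ (Pl v) * A x from by rw [map_mul, hA_ι],
        ← hx, hιPl]
      have hcbcn : cb (cn (ι ℝ v * x)) =
          η n v • cb x - η nbar v • cn x + ι ℝ v * cb (cn x) := by
        rw [hcn_mul v x, map_sub, map_smul, hcb_mul v (cn x)]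
        abel
      rw [hcbcn, hcn_mul v x, hcb_mul v x]
      -- now a pure (anti)commutation identity
      have swv_N : ∀ y : ExteriorAlgebra ℝ V, ι ℝ v * (N * y) = -(N * (ι ℝ v * y)) := by
        intro y; rw [← mul_assoc, hN, hsw v n, neg_mul, mul_assoc]
      have swv_Nb : ∀ y : ExteriorAlgebra ℝ V, ι ℝ v * (Nb * y) = -(Nb * (ι ℝ v * y)) := by
        intro y; rw [← mul_assoc, hNb, hsw v nbar, neg_mul, mul_assoc]
      have swNb_N : ∀ y : ExteriorAlgebra ℝ V, Nb * (N * y) = -(N * (Nb * y)) := by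
        intro y; rw [← mul_assoc, hNb, hN, hsw nbar n, neg_mul, mul_assoc]
      simp only [mul_sub, sub_mul, mul_add, add_mul, smul_mul_assoc, mul_smul_comm,
        smul_sub, smul_add, smul_smul, map_sub, map_add, map_smul, mul_assoc,
        swv_N, swv_Nb, swNb_N, hNN, hNbNb, mul_neg, neg_neg, mul_zero, neg_zero,
        smul_neg, smul_zero, sub_zero, zero_sub, add_zero, zero_add, sub_neg_eq_add]
      module
  -- contraction values on generators of T-algebra
  have hφmem : A (cb ω) ∈ extPowerOf T (k - 1) := by
    have main : ∀ (m : ℕ) (x : ExteriorAlgebra ℝ V), x ∈ ⋀[ℝ]^m V →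
        A x ∈ extPowerOf T m ∧ A (cb x) ∈ extPowerOf T (m - 1) := by
      intro m x hx
      induction hx using Submodule.pow_induction_on_left' with
      | algebraMap r =>
        constructor
        · rw [AlgHom.commutes, Algebra.algebraMap_eq_smul_one]
          exact Submodule.smul_mem _ _ (LightconeAux.one_mem_extPowerOf T)
        · rw [CliffordAlgebra.contractLeft_algebraMap, map_zero]
          exact Submodule.zero_mem _
      | add x y i hx hy ihx ihy =>
        exact ⟨by rw [map_add]; exact add_mem ihx.1 ihy.1,
          by rw [map_add, map_add]; exact add_mem ihx.2 ihy.2⟩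
      | mem_mul m hm i x hxi ihx =>
        obtain ⟨v, rfl⟩ := hm
        constructor
        · rw [map_mul, hA_ι]
          exact LightconeAux.ι_mul_mem_extPowerOf (hPT v) ihx.1
        · rw [hcb_mul v x, map_sub, map_smul, map_mul, hA_ι]
          refine sub_mem (Submodule.smul_mem _ _ ?_) ?_
          · exact ihx.1
          · rcases i with _ | j
            · rw [pow_zero] at hxi
              obtain ⟨r, rfl⟩ := Submodule.mem_one.mp hxi
              rw [CliffordAlgebra.contractLeft_algebraMap, map_zero, mul_zero]
              exact Submodule.zero_mem _
            · exact LightconeAux.ι_mul_mem_extPowerOf (hPT v) ihx.2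
    exact (main k ω hω).2
  -- the candidate
  have hcnψ : cn (cb ω) = 0 := by
    have h := CliffordAlgebra.contractLeft_comm (d := η n) (d' := η nbar)
      (Q := (0 : QuadraticForm ℝ V)) ω
    rw [← hcn, ← hcb] at h
    rw [h, hcoclosed, map_zero, neg_zero]
  have hcbψ : cb (cb ω) = 0 := by
    have h := CliffordAlgebra.contractLeft_contractLeft (d := η nbar)
      (Q := (0 : QuadraticForm ℝ V)) ω
    rw [← hcb] at h
    exact h
  have hAψ : A (cb ω) = cb ω := by
    rw [← hkey (cb ω), hFexp, hcnψ, hcbψ, map_zero]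
    simp
  have hωeq : ω = N * cb ω := by
    have := hcbN ω
    rw [hclosed, map_zero] at this
    exact sub_eq_zero.mp this.symm
  refine ⟨A (cb ω), ⟨hφmem, by rw [hAψ, ← hωeq]⟩, ?_⟩
  intro y ⟨hymem, hyeq⟩
  have hdiff : N * (y - A (cb ω)) = 0 := by
    rw [mul_sub, ← hyeq, hAψ, ← hωeq, sub_self]
  have hcby : cb (y - A (cb ω)) = 0 := by
    rw [map_sub]
    rw [LightconeAux.contract_eq_zero_of_mem_extPowerOf (η nbar) hηnbarT hymem,
      LightconeAux.contract_eq_zero_of_mem_extPowerOf (η nbar) hηnbarT hφmem, sub_self]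
  have := hcbN (y - A (cb ω))
  rw [hdiff, map_zero, hcby, mul_zero, sub_zero] at this
  exact sub_eq_zero.mp this.symm
end

section
/- Let V be a D-dimensional real vector space with Lorentzian form η, n a nonzero null vector, n̄ null with η(n,n̄)=1, and T the transverse subspace. Suppose K ∈ Λ^{p+1}V ⊗ Λ^{q+1}V satisfies: (a) n ∧₁ K = 0 and n ∧₂ K = 0 (wedging n into the first, respectively second, exterior factor annihilates K), and (b) ι¹_{n^♭} K = 0 and ι²_{n^♭} K = 0 (interior product of n^♭ in either factor annihilates K). Then K = (n ∧₁)(n ∧₂) φ for a unique φ ∈ Λ^p T ⊗ Λ^q T. -/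
open ExteriorAlgebra TensorProduct

namespace Lightcone

variable {V : Type*} [AddCommGroup V] [Module ℝ V]

/-- Contraction operator on the exterior algebra. -/
noncomputable def ctr (g : Module.Dual ℝ V) : ExteriorAlgebra ℝ V →ₗ[ℝ] ExteriorAlgebra ℝ V :=
  CliffordAlgebra.contractLeft (Q := (0 : QuadraticForm ℝ V)) g

lemma ctr_ι_mul (g : Module.Dual ℝ V) (a : V) (x : ExteriorAlgebra ℝ V) :
    ctr g (ι ℝ a * x) = g a • x - ι ℝ a * ctr g x :=
  CliffordAlgebra.contractLeft_ι_mul _ _ _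

lemma ctr_one (g : Module.Dual ℝ V) : ctr g (1 : ExteriorAlgebra ℝ V) = 0 :=
  CliffordAlgebra.contractLeft_one _ _

lemma ctr_ctr (g : Module.Dual ℝ V) (x : ExteriorAlgebra ℝ V) : ctr g (ctr g x) = 0 :=
  CliffordAlgebra.contractLeft_contractLeft _ _

lemma ctr_comm (g g' : Module.Dual ℝ V) (x : ExteriorAlgebra ℝ V) :
    ctr g (ctr g' x) = -(ctr g' (ctr g x)) :=
  CliffordAlgebra.contractLeft_comm _ _ _

lemma contract_listprod_zero (g : Module.Dual ℝ V) {k : ℕ} (f : Fin k → V)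
    (hf : ∀ i, g (f i) = 0) :
    ctr g ((List.ofFn fun i => ι ℝ (f i)).prod) = 0 := by
  induction k with
  | zero => simpa using ctr_one g
  | succ k ih =>
      rw [List.ofFn_succ, List.prod_cons, ctr_ι_mul, hf 0, zero_smul, zero_sub,
        ih (fun i => f i.succ) (fun i => hf i.succ), mul_zero, neg_zero]

/-- The subalgebra (as a submodule) generated by `ι` of vectors of `T`. -/
def transAlg (T : Submodule ℝ V) : Submodule ℝ (ExteriorAlgebra ℝ V) :=
  Submodule.span ℝ
    { x | ∃ (k : ℕ) (f : Fin k → V), (∀ i, f i ∈ T) ∧ x = (List.ofFn fun i => ι ℝ (f i)).prod }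

lemma extPowerOf_le_transAlg (T : Submodule ℝ V) (k : ℕ) : extPowerOf T k ≤ transAlg T :=
  Submodule.span_mono (fun x ⟨f, hf, hx⟩ => ⟨k, f, hf, hx⟩)

lemma ctr_transAlg_zero (T : Submodule ℝ V) (g : Module.Dual ℝ V)
    (hg : ∀ t ∈ T, g t = 0) {x : ExteriorAlgebra ℝ V} (hx : x ∈ transAlg T) :
    ctr g x = 0 := by
  induction hx using Submodule.span_induction with
  | mem x hx =>
      obtain ⟨k, f, hf, rfl⟩ := hx
      exact contract_listprod_zero g f (fun i => hg _ (hf i))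
  | zero => simp
  | add x y _ _ hx hy => rw [map_add, hx, hy, add_zero]
  | smul r x _ hx => rw [map_smul, hx, smul_zero]

lemma one_mem_extPowerOf_zero (T : Submodule ℝ V) : (1 : ExteriorAlgebra ℝ V) ∈ extPowerOf T 0 :=
  Submodule.subset_span ⟨fun i => i.elim0, fun i => i.elim0, by simp⟩

lemma ι_mul_mem_extPowerOf (T : Submodule ℝ V) {t : V} (ht : t ∈ T) {k : ℕ}
    {x : ExteriorAlgebra ℝ V} (hx : x ∈ extPowerOf T k) :
    ι ℝ t * x ∈ extPowerOf T (k + 1) := by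
  induction hx using Submodule.span_induction with
  | mem x hx =>
      obtain ⟨f, hf, rfl⟩ := hx
      refine Submodule.subset_span ⟨Fin.cons t f, ?_, ?_⟩
      · intro i
        refine Fin.cases ht (fun j => hf j) i
      · rw [List.ofFn_succ]
        simp [List.prod_cons]
  | zero => simpa using Submodule.zero_mem _
  | add x y _ _ hx hy => rw [mul_add]; exact Submodule.add_mem _ hx hy
  | smul r x _ hx => rw [mul_smul_comm]; exact Submodule.smul_mem _ _ hx

lemma ι_mul_mem_transAlg (T : Submodule ℝ V) {t : V} (ht : t ∈ T)
    {x : ExteriorAlgebra ℝ V} (hx : x ∈ transAlg T) :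
    ι ℝ t * x ∈ transAlg T := by
  induction hx using Submodule.span_induction with
  | mem x hx =>
      obtain ⟨k, f, hf, rfl⟩ := hx
      refine Submodule.subset_span ⟨k + 1, Fin.cons t f, ?_, ?_⟩
      · intro i
        refine Fin.cases ht (fun j => hf j) i
      · rw [List.ofFn_succ]
        simp [List.prod_cons]
  | zero => simpa using Submodule.zero_mem _
  | add x y _ _ hx hy => rw [mul_add]; exact Submodule.add_mem _ hx hy
  | smul r x _ hx => rw [mul_smul_comm]; exact Submodule.smul_mem _ _ hx

/-- `Emin T k` is `extPowerOf T (k-1)`, with `⊥` for `k = 0`. -/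
def Emin (T : Submodule ℝ V) : ℕ → Submodule ℝ (ExteriorAlgebra ℝ V)
  | 0 => ⊥
  | (k + 1) => extPowerOf T k

lemma Emin_le_transAlg (T : Submodule ℝ V) (k : ℕ) : Emin T k ≤ transAlg T := by
  cases k with
  | zero => exact bot_le
  | succ k => exact extPowerOf_le_transAlg T k

lemma ι_mul_mem_Emin (T : Submodule ℝ V) {t : V} (ht : t ∈ T) {k : ℕ}
    {x : ExteriorAlgebra ℝ V} (hx : x ∈ Emin T k) :
    ι ℝ t * x ∈ Emin T (k + 1) := by
  cases k with
  | zero => simp only [Emin, Submodule.mem_bot] at hx; simpa [hx] using Submodule.zero_mem _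
  | succ k => exact ι_mul_mem_extPowerOf T ht hx

lemma sq_mul (x : V) (z : ExteriorAlgebra ℝ V) : ι ℝ x * (ι ℝ x * z) = 0 := by
  rw [← mul_assoc, ι_sq_zero, zero_mul]

lemma swap_mul (x y : V) (z : ExteriorAlgebra ℝ V) :
    ι ℝ x * (ι ℝ y * z) = -(ι ℝ y * (ι ℝ x * z)) := by
  rw [← mul_assoc, ← mul_assoc, eq_neg_of_add_eq_zero_left (ι_add_mul_swap x y), neg_mul]

section Lorentz

variable (η : LinearMap.BilinForm ℝ V) (n nbar : V)

/-- The transverse subspace. -/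
abbrev Tsub : Submodule ℝ V := η.orthogonal (Submodule.span ℝ {n, nbar})

lemma n_mem_span : n ∈ Submodule.span ℝ ({n, nbar} : Set V) :=
  Submodule.subset_span (Set.mem_insert _ _)

lemma nbar_mem_span : nbar ∈ Submodule.span ℝ ({n, nbar} : Set V) :=
  Submodule.subset_span (Set.mem_insert_of_mem _ rfl)

lemma eta_n_T {t : V} (ht : t ∈ Tsub η n nbar) : η n t = 0 :=
  (LinearMap.BilinForm.mem_orthogonal_iff.mp ht) n (n_mem_span n nbar)

lemma eta_nbar_T {t : V} (ht : t ∈ Tsub η n nbar) : η nbar t = 0 :=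
  (LinearMap.BilinForm.mem_orthogonal_iff.mp ht) nbar (nbar_mem_span n nbar)

variable (hsym : ∀ x y : V, η x y = η y x)
variable (hnull : η n n = 0) (hnbar : η nbar nbar = 0) (hpair : η n nbar = 1)

include hsym hnull hnbar hpair in
lemma exists_decomp_vector (v : V) :
    ∃ (α β : ℝ) (t : V), t ∈ Tsub η n nbar ∧ v = α • n + β • nbar + t := by
  refine ⟨η nbar v, η n v, v - η nbar v • n - η n v • nbar, ?_, by abel⟩
  have hnt : η n (v - η nbar v • n - η n v • nbar) = 0 := by
    simp [map_sub, map_smul, hnull, hpair, smul_eq_mul]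
  have hbt : η nbar (v - η nbar v • n - η n v • nbar) = 0 := by
    have h1 : η nbar n = 1 := (hsym nbar n).trans hpair
    simp [map_sub, map_smul, hnbar, h1, smul_eq_mul]
  rw [LinearMap.BilinForm.mem_orthogonal_iff]
  intro u hu
  rw [Submodule.mem_span_pair] at hu
  obtain ⟨a, b, rfl⟩ := hu
  simp only [LinearMap.BilinForm.IsOrtho, LinearMap.map_add, LinearMap.map_smul,
    LinearMap.add_apply, LinearMap.smul_apply, hnt, hbt, smul_eq_mul, mul_zero, add_zero]


include hsym hnull hnbar hpair in
lemma monomial_decomp {k : ℕ} (f : Fin k → V) :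
    ∃ a ∈ transAlg (Tsub η n nbar), ∃ b ∈ Emin (Tsub η n nbar) k,
      ∃ c ∈ Emin (Tsub η n nbar) k, ∃ d ∈ extPowerOf (Tsub η n nbar) k,
        (List.ofFn fun i => ι ℝ (f i)).prod =
          ι ℝ n * (ι ℝ nbar * a) + ι ℝ n * b + ι ℝ nbar * c + d := by
  induction k with
  | zero =>
      exact ⟨0, Submodule.zero_mem _, 0, Submodule.zero_mem _, 0, Submodule.zero_mem _,
        1, one_mem_extPowerOf_zero _, by simp⟩
  | succ k ih =>
      obtain ⟨a, ha, b, hb, c, hc, d, hd, heq⟩ := ih (fun i => f i.succ)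
      obtain ⟨α, β, t, htT, hv⟩ := exists_decomp_vector η n nbar hsym hnull hnbar hpair (f 0)
      refine ⟨α • c - β • b + ι ℝ t * a,
        ?_, α • d - ι ℝ t * b, ?_, β • d - ι ℝ t * c, ?_, ι ℝ t * d, ?_, ?_⟩
      · exact Submodule.add_mem _
          (Submodule.sub_mem _ (Submodule.smul_mem _ _ (Emin_le_transAlg _ _ hc))
            (Submodule.smul_mem _ _ (Emin_le_transAlg _ _ hb)))
          (ι_mul_mem_transAlg _ htT ha)
      · exact Submodule.sub_mem _ (Submodule.smul_mem _ _ hd) (ι_mul_mem_Emin _ htT hb)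
      · exact Submodule.sub_mem _ (Submodule.smul_mem _ _ hd) (ι_mul_mem_Emin _ htT hc)
      · exact ι_mul_mem_extPowerOf _ htT hd
      · rw [List.ofFn_succ, List.prod_cons, heq, hv]
        simp only [map_add, map_smul]
        simp only [add_mul, smul_mul_assoc, mul_add, mul_sub, mul_smul_comm,
          sq_mul, swap_mul nbar n, swap_mul t n, swap_mul t nbar,
          mul_neg, neg_neg, mul_zero, smul_neg, smul_zero]
        module


include hnull in
lemma C_n_mul (x : ExteriorAlgebra ℝ V) :
    ctr (η n) (ι ℝ n * x) = -(ι ℝ n * ctr (η n) x) := by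
  rw [ctr_ι_mul, hnull, zero_smul, zero_sub]

include hpair in
lemma C_nbar_mul (x : ExteriorAlgebra ℝ V) :
    ctr (η n) (ι ℝ nbar * x) = x - ι ℝ nbar * ctr (η n) x := by
  rw [ctr_ι_mul, hpair, one_smul]

include hsym hpair in
lemma B_n_mul (x : ExteriorAlgebra ℝ V) :
    ctr (η nbar) (ι ℝ n * x) = x - ι ℝ n * ctr (η nbar) x := by
  rw [ctr_ι_mul, (hsym nbar n).trans hpair, one_smul]

include hnbar in
lemma B_nbar_mul (x : ExteriorAlgebra ℝ V) :
    ctr (η nbar) (ι ℝ nbar * x) = -(ι ℝ nbar * ctr (η nbar) x) := by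
  rw [ctr_ι_mul, hnbar, zero_smul, zero_sub]

lemma C_trans_zero {x : ExteriorAlgebra ℝ V} (hx : x ∈ transAlg (Tsub η n nbar)) :
    ctr (η n) x = 0 :=
  ctr_transAlg_zero _ _ (fun t ht => eta_n_T η n nbar ht) hx

lemma B_trans_zero {x : ExteriorAlgebra ℝ V} (hx : x ∈ transAlg (Tsub η n nbar)) :
    ctr (η nbar) x = 0 :=
  ctr_transAlg_zero _ _ (fun t ht => eta_nbar_T η n nbar ht) hx

/-- The transverse-extraction operator `Φ = C ∘ B ∘ (n ∧ ·) ∘ (n̄ ∧ ·) ∘ B`. -/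
noncomputable def Phi : ExteriorAlgebra ℝ V →ₗ[ℝ] ExteriorAlgebra ℝ V :=
  ctr (η n) ∘ₗ ctr (η nbar) ∘ₗ LinearMap.mulLeft ℝ (ι ℝ n) ∘ₗ
    LinearMap.mulLeft ℝ (ι ℝ nbar) ∘ₗ ctr (η nbar)

lemma Phi_apply (x : ExteriorAlgebra ℝ V) :
    Phi η n nbar x = ctr (η n) (ctr (η nbar) (ι ℝ n * (ι ℝ nbar * (ctr (η nbar) x)))) := rfl

include hsym hnbar hpair in
lemma Pi_fix {x : ExteriorAlgebra ℝ V} (hB : ctr (η nbar) x = 0) (hC : ctr (η n) x = 0) :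
    ctr (η n) (ctr (η nbar) (ι ℝ n * (ι ℝ nbar * x))) = x := by
  rw [B_n_mul η n nbar hsym hpair, B_nbar_mul η nbar hnbar, hB, mul_zero, neg_zero,
    mul_zero, sub_zero, C_nbar_mul η n nbar hpair, hC, mul_zero, sub_zero]

include hsym hnbar hpair in
lemma Phi_n_mul_trans {x : ExteriorAlgebra ℝ V} (hx : x ∈ transAlg (Tsub η n nbar)) :
    Phi η n nbar (ι ℝ n * x) = x := by
  have h : ctr (η nbar) (ι ℝ n * x) = x := by
    rw [B_n_mul η n nbar hsym hpair, B_trans_zero η n nbar hx, mul_zero, sub_zero]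
  rw [Phi_apply, h]
  exact Pi_fix η n nbar hsym hnbar hpair (B_trans_zero η n nbar hx) (C_trans_zero η n nbar hx)

include hsym hnull hnbar hpair in
lemma Phi_mem_extPowerOf {k : ℕ} {x : ExteriorAlgebra ℝ V} (hx : x ∈ ⋀[ℝ]^(k+1) V) :
    Phi η n nbar x ∈ extPowerOf (Tsub η n nbar) k := by
  rw [← ιMulti_span_fixedDegree] at hx
  induction hx using Submodule.span_induction with
  | mem x hx =>
      obtain ⟨v, rfl⟩ := hx
      rw [ιMulti_apply]
      obtain ⟨a, ha, b, hb, c, hc, d, hd, heq⟩ :=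
        monomial_decomp η n nbar hsym hnull hnbar hpair v
      have hb' : b ∈ extPowerOf (Tsub η n nbar) k := hb
      have hBa : ctr (η nbar) a = 0 := B_trans_zero η n nbar ha
      have hBb : ctr (η nbar) b = 0 :=
        B_trans_zero η n nbar (extPowerOf_le_transAlg _ _ hb')
      have hCb : ctr (η n) b = 0 :=
        C_trans_zero η n nbar (extPowerOf_le_transAlg _ _ hb')
      have hBc : ctr (η nbar) c = 0 :=
        B_trans_zero η n nbar (Emin_le_transAlg _ _ hc)
      have hBd : ctr (η nbar) d = 0 :=
        B_trans_zero η n nbar (extPowerOf_le_transAlg _ _ hd)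
      have hBprod : ctr (η nbar) ((List.ofFn fun i => ι ℝ (v i)).prod) = ι ℝ nbar * a + b := by
        rw [heq]
        simp only [map_add, B_n_mul η n nbar hsym hpair, B_nbar_mul η nbar hnbar,
          hBa, hBb, hBc, hBd, mul_zero, neg_zero, sub_zero, add_zero, zero_add, neg_neg]
      rw [Phi_apply, hBprod, mul_add, sq_mul, zero_add,
        Pi_fix η n nbar hsym hnbar hpair hBb hCb]
      exact hb'
  | zero => simpa using Submodule.zero_mem _
  | add x y _ _ hx hy => rw [map_add]; exact Submodule.add_mem _ hx hy
  | smul r x _ hx => rw [map_smul]; exact Submodule.smul_mem _ _ hx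


include hsym hpair in
lemma opA :
    LinearMap.mulLeft ℝ (ι ℝ n) ∘ₗ ctr (η nbar) =
      LinearMap.id - ctr (η nbar) ∘ₗ LinearMap.mulLeft ℝ (ι ℝ n) := by
  refine LinearMap.ext fun x => ?_
  simp only [LinearMap.comp_apply, LinearMap.sub_apply, LinearMap.id_apply,
    LinearMap.mulLeft_apply]
  rw [B_n_mul η n nbar hsym hpair]
  abel

include hsym hnull hnbar hpair in
lemma opPi :
    ctr (η n) ∘ₗ ctr (η nbar) ∘ₗ LinearMap.mulLeft ℝ (ι ℝ n) ∘ₗ LinearMap.mulLeft ℝ (ι ℝ nbar) =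
      LinearMap.id - LinearMap.mulLeft ℝ (ι ℝ nbar) ∘ₗ ctr (η n)
        - LinearMap.mulLeft ℝ (ι ℝ n) ∘ₗ ctr (η nbar)
        + (LinearMap.mulLeft ℝ (ι ℝ n) ∘ₗ LinearMap.mulLeft ℝ (ι ℝ nbar) ∘ₗ ctr (η n))
            ∘ₗ ctr (η nbar) := by
  refine LinearMap.ext fun x => ?_
  simp only [LinearMap.comp_apply, LinearMap.sub_apply, LinearMap.add_apply,
    LinearMap.id_apply, LinearMap.mulLeft_apply]
  rw [B_n_mul η n nbar hsym hpair, B_nbar_mul η nbar hnbar, mul_neg, sub_neg_eq_add,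
    map_add, C_nbar_mul η n nbar hpair, C_n_mul η n hnull, C_nbar_mul η n nbar hpair,
    mul_sub]
  abel

lemma opCB :
    ctr (η n) ∘ₗ ctr (η nbar) = -(ctr (η nbar) ∘ₗ ctr (η n)) :=
  LinearMap.ext fun x => ctr_comm _ _ _

lemma opBB : ctr (η nbar) ∘ₗ ctr (η nbar) = (0 : _ →ₗ[ℝ] _) :=
  LinearMap.ext fun x => ctr_ctr _ _

end Lorentz

section TensorHelpers

variable {A : Type*} [AddCommGroup A] [Module ℝ A]

lemma mapL (f₂ f₁ : A →ₗ[ℝ] A) :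
    TensorProduct.map (f₂ ∘ₗ f₁) (LinearMap.id : A →ₗ[ℝ] A) =
      TensorProduct.map f₂ LinearMap.id ∘ₗ TensorProduct.map f₁ LinearMap.id := by
  have h := TensorProduct.map_comp f₂ (LinearMap.id : A →ₗ[ℝ] A) f₁ LinearMap.id
  rwa [LinearMap.id_comp] at h

lemma mapR (g₂ g₁ : A →ₗ[ℝ] A) :
    TensorProduct.map (LinearMap.id : A →ₗ[ℝ] A) (g₂ ∘ₗ g₁) =
      TensorProduct.map LinearMap.id g₂ ∘ₗ TensorProduct.map LinearMap.id g₁ := by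
  have h := TensorProduct.map_comp (LinearMap.id : A →ₗ[ℝ] A) g₂ LinearMap.id g₁
  rwa [LinearMap.id_comp] at h

lemma mapLR (f g : A →ₗ[ℝ] A) :
    TensorProduct.map f g =
      TensorProduct.map f LinearMap.id ∘ₗ TensorProduct.map LinearMap.id g := by
  have h := TensorProduct.map_comp f (LinearMap.id : A →ₗ[ℝ] A) LinearMap.id g
  rwa [LinearMap.comp_id, LinearMap.id_comp] at h

lemma map_sub_left' (f g h : A →ₗ[ℝ] A) :
    TensorProduct.map (f - g) h = TensorProduct.map f h - TensorProduct.map g h := by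
  rw [sub_eq_add_neg, ← neg_one_smul ℝ g, TensorProduct.map_add_left,
    TensorProduct.map_smul_left]
  module

lemma map_sub_right' (f g h : A →ₗ[ℝ] A) :
    TensorProduct.map f (g - h) = TensorProduct.map f g - TensorProduct.map f h := by
  rw [sub_eq_add_neg, ← neg_one_smul ℝ h, TensorProduct.map_add_right,
    TensorProduct.map_smul_right]
  module

lemma map_neg_left' (f g : A →ₗ[ℝ] A) :
    TensorProduct.map (-f) g = -TensorProduct.map f g := by
  rw [← neg_one_smul ℝ f, TensorProduct.map_smul_left]
  module

lemma map_neg_right' (f g : A →ₗ[ℝ] A) :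
    TensorProduct.map f (-g) = -TensorProduct.map f g := by
  rw [← neg_one_smul ℝ g, TensorProduct.map_smul_right]
  module

end TensorHelpers

end Lightcone

open Lightcone in
/-- Bargmann–Wigner light-cone theorem for bi-forms: a bi-form
`K ∈ ⋀^(p+1) V ⊗ ⋀^(q+1) V` that is annihilated by wedging `n` into either factor
and by interior product with `n♭` in either factor is `(n ∧₁)(n ∧₂) φ` for a unique
transverse `φ ∈ ⋀^p T ⊗ ⋀^q T`. -/
theorem lightcone_biform (D p q : ℕ) (V : Type*) [AddCommGroup V] [Module ℝ V]
    (hdim : Module.finrank ℝ V = D) (η : LinearMap.BilinForm ℝ V)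
    (hsym : ∀ x y : V, η x y = η y x) (hnd : η.Nondegenerate)
    (hLor : ∃ b : Module.Basis (Fin D) ℝ V, ∀ i j : Fin D,
      η (b i) (b j) = if i = j then (if (i : ℕ) = 0 then (-1 : ℝ) else 1) else 0)
    (n nbar : V) (hn : n ≠ 0) (hnull : η n n = 0) (hnbar : η nbar nbar = 0)
    (hpair : η n nbar = 1)
    (K : ExteriorAlgebra ℝ V ⊗[ℝ] ExteriorAlgebra ℝ V)
    (hK : K ∈ LinearMap.range (TensorProduct.mapIncl (⋀[ℝ]^(p+1) V) (⋀[ℝ]^(q+1) V)))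
    (hw1 : TensorProduct.map (LinearMap.mulLeft ℝ (ι ℝ n)) LinearMap.id K = 0)
    (hw2 : TensorProduct.map LinearMap.id (LinearMap.mulLeft ℝ (ι ℝ n)) K = 0)
    (hc1 : TensorProduct.map
      (CliffordAlgebra.contractLeft (Q := (0 : QuadraticForm ℝ V)) (η n)) LinearMap.id K = 0)
    (hc2 : TensorProduct.map LinearMap.id
      (CliffordAlgebra.contractLeft (Q := (0 : QuadraticForm ℝ V)) (η n)) K = 0) :
    ∃! φ : ExteriorAlgebra ℝ V ⊗[ℝ] ExteriorAlgebra ℝ V,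
      φ ∈ LinearMap.range (TensorProduct.mapIncl
            (extPowerOf (η.orthogonal (Submodule.span ℝ {n, nbar})) p)
            (extPowerOf (η.orthogonal (Submodule.span ℝ {n, nbar})) q)) ∧
        K = TensorProduct.map (LinearMap.mulLeft ℝ (ι ℝ n)) (LinearMap.mulLeft ℝ (ι ℝ n)) φ := by
  classical
  obtain ⟨K₀, hK₀⟩ := hK
  have hc1' : TensorProduct.map (ctr (η n)) LinearMap.id K = 0 := hc1
  have hc2' : TensorProduct.map LinearMap.id (ctr (η n)) K = 0 := hc2
  have hA := Lightcone.opA η n nbar hsym hpair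
  -- Step A : K = (n ∧₁)(n ∧₂) (B₁ B₂ K)
  have stepA1 : TensorProduct.map (LinearMap.mulLeft ℝ (ι ℝ n) ∘ₗ ctr (η nbar))
      LinearMap.id K = K := by
    rw [hA, Lightcone.map_sub_left', Lightcone.mapL, TensorProduct.map_id,
      LinearMap.sub_apply, LinearMap.id_apply, LinearMap.comp_apply, hw1, map_zero, sub_zero]
  have stepA2 : TensorProduct.map LinearMap.id
      (LinearMap.mulLeft ℝ (ι ℝ n) ∘ₗ ctr (η nbar)) K = K := by
    rw [hA, Lightcone.map_sub_right', Lightcone.mapR, TensorProduct.map_id,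
      LinearMap.sub_apply, LinearMap.id_apply, LinearMap.comp_apply, hw2, map_zero, sub_zero]
  have hKeq : K = TensorProduct.map (LinearMap.mulLeft ℝ (ι ℝ n)) (LinearMap.mulLeft ℝ (ι ℝ n))
      (TensorProduct.map (ctr (η nbar)) (ctr (η nbar)) K) := by
    have h1 : TensorProduct.map (LinearMap.mulLeft ℝ (ι ℝ n) ∘ₗ ctr (η nbar))
        (LinearMap.mulLeft ℝ (ι ℝ n) ∘ₗ ctr (η nbar)) K = K := by
      rw [Lightcone.mapLR, LinearMap.comp_apply, stepA2, stepA1]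
    rw [← LinearMap.comp_apply, ← TensorProduct.map_comp, h1]
  -- vanishing properties of ψ = B₁ B₂ K
  have hψB1 : TensorProduct.map (ctr (η nbar)) LinearMap.id
      (TensorProduct.map (ctr (η nbar)) (ctr (η nbar)) K) = 0 := by
    rw [← LinearMap.comp_apply, ← TensorProduct.map_comp, Lightcone.opBB η nbar,
      TensorProduct.map_zero_left, LinearMap.zero_apply]
  have hψB2 : TensorProduct.map LinearMap.id (ctr (η nbar))
      (TensorProduct.map (ctr (η nbar)) (ctr (η nbar)) K) = 0 := by
    rw [← LinearMap.comp_apply, ← TensorProduct.map_comp, Lightcone.opBB η nbar,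
      TensorProduct.map_zero_right, LinearMap.zero_apply]
  have hψC1 : TensorProduct.map (ctr (η n)) LinearMap.id
      (TensorProduct.map (ctr (η nbar)) (ctr (η nbar)) K) = 0 := by
    have e1 : TensorProduct.map (ctr (η n) ∘ₗ ctr (η nbar)) (ctr (η nbar)) K
        = TensorProduct.map (ctr (η n)) LinearMap.id
            (TensorProduct.map (ctr (η nbar)) (ctr (η nbar)) K) := by
      have h := TensorProduct.map_comp (ctr (η n))
        (LinearMap.id (R := ℝ) (M := ExteriorAlgebra ℝ V)) (ctr (η nbar)) (ctr (η nbar))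
      rw [LinearMap.id_comp] at h
      rw [h, LinearMap.comp_apply]
    have e2 : TensorProduct.map (ctr (η nbar) ∘ₗ ctr (η n)) (ctr (η nbar)) K
        = TensorProduct.map (ctr (η nbar)) (ctr (η nbar))
            (TensorProduct.map (ctr (η n)) LinearMap.id K) := by
      have h := TensorProduct.map_comp (ctr (η nbar)) (ctr (η nbar)) (ctr (η n))
        (LinearMap.id (R := ℝ) (M := ExteriorAlgebra ℝ V))
      rw [LinearMap.comp_id] at h
      rw [h, LinearMap.comp_apply]
    rw [← e1, Lightcone.opCB η n nbar, Lightcone.map_neg_left', LinearMap.neg_apply, e2,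
      hc1', map_zero, neg_zero]
  have hψC2 : TensorProduct.map LinearMap.id (ctr (η n))
      (TensorProduct.map (ctr (η nbar)) (ctr (η nbar)) K) = 0 := by
    have e1 : TensorProduct.map (ctr (η nbar)) (ctr (η n) ∘ₗ ctr (η nbar)) K
        = TensorProduct.map LinearMap.id (ctr (η n))
            (TensorProduct.map (ctr (η nbar)) (ctr (η nbar)) K) := by
      have h := TensorProduct.map_comp (LinearMap.id (R := ℝ) (M := ExteriorAlgebra ℝ V))
        (ctr (η n)) (ctr (η nbar)) (ctr (η nbar))
      rw [LinearMap.id_comp] at h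
      rw [h, LinearMap.comp_apply]
    have e2 : TensorProduct.map (ctr (η nbar)) (ctr (η nbar) ∘ₗ ctr (η n)) K
        = TensorProduct.map (ctr (η nbar)) (ctr (η nbar))
            (TensorProduct.map LinearMap.id (ctr (η n)) K) := by
      have h := TensorProduct.map_comp (ctr (η nbar)) (ctr (η nbar))
        (LinearMap.id (R := ℝ) (M := ExteriorAlgebra ℝ V)) (ctr (η n))
      rw [LinearMap.comp_id] at h
      rw [h, LinearMap.comp_apply]
    rw [← e1, Lightcone.opCB η n nbar, Lightcone.map_neg_right', LinearMap.neg_apply, e2,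
      hc2', map_zero, neg_zero]
  -- Π fixes ψ = B₁B₂K in each factor
  have hPidef := Lightcone.opPi η n nbar hsym hnull hnbar hpair
  have hPi1 : TensorProduct.map
      (ctr (η n) ∘ₗ ctr (η nbar) ∘ₗ LinearMap.mulLeft ℝ (ι ℝ n) ∘ₗ
        LinearMap.mulLeft ℝ (ι ℝ nbar)) LinearMap.id
      (TensorProduct.map (ctr (η nbar)) (ctr (η nbar)) K)
      = TensorProduct.map (ctr (η nbar)) (ctr (η nbar)) K := by
    rw [hPidef, TensorProduct.map_add_left, Lightcone.map_sub_left', Lightcone.map_sub_left',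
      TensorProduct.map_id, LinearMap.add_apply, LinearMap.sub_apply, LinearMap.sub_apply,
      LinearMap.id_apply, Lightcone.mapL, Lightcone.mapL, Lightcone.mapL,
      LinearMap.comp_apply, LinearMap.comp_apply, LinearMap.comp_apply,
      hψB1, hψC1, map_zero, map_zero, map_zero, sub_zero, sub_zero, add_zero]
  have hPi2 : TensorProduct.map LinearMap.id
      (ctr (η n) ∘ₗ ctr (η nbar) ∘ₗ LinearMap.mulLeft ℝ (ι ℝ n) ∘ₗ
        LinearMap.mulLeft ℝ (ι ℝ nbar))
      (TensorProduct.map (ctr (η nbar)) (ctr (η nbar)) K)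
      = TensorProduct.map (ctr (η nbar)) (ctr (η nbar)) K := by
    rw [hPidef, TensorProduct.map_add_right, Lightcone.map_sub_right', Lightcone.map_sub_right',
      TensorProduct.map_id, LinearMap.add_apply, LinearMap.sub_apply, LinearMap.sub_apply,
      LinearMap.id_apply, Lightcone.mapR, Lightcone.mapR, Lightcone.mapR,
      LinearMap.comp_apply, LinearMap.comp_apply, LinearMap.comp_apply,
      hψB2, hψC2, map_zero, map_zero, map_zero, sub_zero, sub_zero, add_zero]
  have hPhisplit : Phi η n nbar =
      (ctr (η n) ∘ₗ ctr (η nbar) ∘ₗ LinearMap.mulLeft ℝ (ι ℝ n) ∘ₗ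
        LinearMap.mulLeft ℝ (ι ℝ nbar)) ∘ₗ ctr (η nbar) := rfl
  have hφψ : TensorProduct.map (Phi η n nbar) (Phi η n nbar) K
      = TensorProduct.map (ctr (η nbar)) (ctr (η nbar)) K := by
    rw [hPhisplit, TensorProduct.map_comp, LinearMap.comp_apply,
      Lightcone.mapLR, LinearMap.comp_apply, hPi2, hPi1]
  have hK₀' : TensorProduct.map (⋀[ℝ]^(p+1) V).subtype (⋀[ℝ]^(q+1) V).subtype K₀ = K := hK₀
  refine ⟨TensorProduct.map (Phi η n nbar) (Phi η n nbar) K, ⟨?_, ?_⟩, ?_⟩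
  · -- membership in the transverse bi-form space
    refine ⟨TensorProduct.map
        (LinearMap.codRestrict (extPowerOf (η.orthogonal (Submodule.span ℝ {n, nbar})) p)
          (Phi η n nbar ∘ₗ (⋀[ℝ]^(p+1) V).subtype)
          (fun z => Phi_mem_extPowerOf η n nbar hsym hnull hnbar hpair z.2))
        (LinearMap.codRestrict (extPowerOf (η.orthogonal (Submodule.span ℝ {n, nbar})) q)
          (Phi η n nbar ∘ₗ (⋀[ℝ]^(q+1) V).subtype)
          (fun z => Phi_mem_extPowerOf η n nbar hsym hnull hnbar hpair z.2)) K₀, ?_⟩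
    show TensorProduct.map
        (extPowerOf (η.orthogonal (Submodule.span ℝ {n, nbar})) p).subtype
        (extPowerOf (η.orthogonal (Submodule.span ℝ {n, nbar})) q).subtype _ = _
    rw [← LinearMap.comp_apply, ← TensorProduct.map_comp,
      LinearMap.subtype_comp_codRestrict, LinearMap.subtype_comp_codRestrict,
      TensorProduct.map_comp, LinearMap.comp_apply, hK₀']
  · -- the reconstruction equation
    rw [hφψ]; exact hKeq
  · -- uniqueness
    rintro y ⟨⟨y₀, rfl⟩, hyeq⟩
    have hyeq' : K = TensorProduct.map (LinearMap.mulLeft ℝ (ι ℝ n)) (LinearMap.mulLeft ℝ (ι ℝ n))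
        (TensorProduct.map
          (extPowerOf (η.orthogonal (Submodule.span ℝ {n, nbar})) p).subtype
          (extPowerOf (η.orthogonal (Submodule.span ℝ {n, nbar})) q).subtype y₀) := hyeq
    have hid_p : Phi η n nbar ∘ₗ (LinearMap.mulLeft ℝ (ι ℝ n) ∘ₗ
        (extPowerOf (η.orthogonal (Submodule.span ℝ {n, nbar})) p).subtype)
        = (extPowerOf (η.orthogonal (Submodule.span ℝ {n, nbar})) p).subtype :=
      LinearMap.ext fun z => Phi_n_mul_trans η n nbar hsym hnbar hpair
        (extPowerOf_le_transAlg _ _ z.2)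
    have hid_q : Phi η n nbar ∘ₗ (LinearMap.mulLeft ℝ (ι ℝ n) ∘ₗ
        (extPowerOf (η.orthogonal (Submodule.span ℝ {n, nbar})) q).subtype)
        = (extPowerOf (η.orthogonal (Submodule.span ℝ {n, nbar})) q).subtype :=
      LinearMap.ext fun z => Phi_n_mul_trans η n nbar hsym hnbar hpair
        (extPowerOf_le_transAlg _ _ z.2)
    have u2 : TensorProduct.map
        (Phi η n nbar ∘ₗ (LinearMap.mulLeft ℝ (ι ℝ n) ∘ₗ
          (extPowerOf (η.orthogonal (Submodule.span ℝ {n, nbar})) p).subtype))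
        (Phi η n nbar ∘ₗ (LinearMap.mulLeft ℝ (ι ℝ n) ∘ₗ
          (extPowerOf (η.orthogonal (Submodule.span ℝ {n, nbar})) q).subtype)) y₀
        = TensorProduct.map (Phi η n nbar) (Phi η n nbar) K := by
      rw [TensorProduct.map_comp, LinearMap.comp_apply, TensorProduct.map_comp,
        LinearMap.comp_apply, ← hyeq']
    show TensorProduct.map
        (extPowerOf (η.orthogonal (Submodule.span ℝ {n, nbar})) p).subtype
        (extPowerOf (η.orthogonal (Submodule.span ℝ {n, nbar})) q).subtype y₀
        = TensorProduct.map (Phi η n nbar) (Phi η n nbar) K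
    rw [← u2, hid_p, hid_q]
end
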